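/- arXiv:math/9211201 — 2 statements merged into one kernel-verified Lean document; each statement's English description precedes it below -/
import Mathlib

section
/- Let G be an FC-group with G/Z(G) infinite and let A be an abelian subgroup of G such that A is generated by Z(G) together with finitely many elements. Then the centralizer C_G(A) is non-abelian. -/
/-!
If `C = C_G(A)` were abelian: as `Z(G)` is central, `C = C_G(S)` for the finite set `S`, and in an
FC-group the centralizer of a finite set has finite index. Together with finitely many coset
representatives `T`, the subgroup `C` generates `G`, so `C ∩ C_G(T)` is central; it has finite index,
contradicting `|G/Z(G)| = ∞`.
-/

open Subgroup

def IsFCGroup (G : Type*) [Group G] : Prop :=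
  ∀ g : G, {h : G | IsConj g h}.Finite

namespace Subgroup

variable {G : Type*} [Group G]

theorem exists_finite_closure_union_eq_top (H : Subgroup G) [H.FiniteIndex] :
    ∃ T : Set G, T.Finite ∧ closure ((H : Set G) ∪ T) = ⊤ := by
  refine ⟨Set.range fun q : G ⧸ H ↦ q.out, Set.finite_range _, eq_top_iff.mpr fun g _ ↦ ?_⟩
  obtain ⟨h, hout⟩ := QuotientGroup.mk_out_eq_mul H g
  have hg : g = (g : G ⧸ H).out * (h : G)⁻¹ := by rw [hout, mul_inv_cancel_right]
  rw [hg]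
  exact mul_mem (subset_closure (Or.inr (Set.mem_range_self _)))
    (subset_closure (Or.inl (inv_mem h.2)))

theorem centralizer_center_union (s : Set G) :
    centralizer ((center G : Set G) ∪ s) = centralizer s := by
  refine le_antisymm (centralizer_le Set.subset_union_right) fun x hx ↦ ?_
  rw [mem_centralizer_iff] at hx ⊢
  rintro y (hy | hy)
  · exact (mem_center_iff.mp hy x).symm
  · exact hx y hy

theorem inf_centralizer_le_center {H : Subgroup G} [IsMulCommutative H] {T : Set G}
    (hT : closure ((H : Set G) ∪ T) = ⊤) : H ⊓ centralizer T ≤ center G := by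
  rintro x ⟨hxH, hxT⟩
  rw [← centralizer_univ, ← coe_top, ← hT, centralizer_closure,
    mem_centralizer_iff]
  rintro y (hy | hy)
  · exact mem_centralizer_iff.mp (le_centralizer H hxH) y hy
  · exact mem_centralizer_iff.mp hxT y hy

end Subgroup

namespace IsFCGroup

variable {G : Type*} [Group G]

theorem finiteIndex_centralizer_singleton (hG : IsFCGroup G) (g : G) :
    (centralizer {g}).FiniteIndex := by
  have horbit : MulAction.orbit (ConjAct G) g = {h : G | IsConj g h} := by
    ext h
    exact ConjAct.mem_orbit_conjAct.trans isConj_comm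
  have hindex : (centralizer {g}).index = (MulAction.stabilizer (ConjAct G) g).index := by
    rw [centralizer_eq_comap_stabilizer]
    exact index_comap_of_surjective _ ConjAct.toConjAct.surjective
  constructor
  rw [hindex, MulAction.index_stabilizer, horbit]
  exact ((Set.ncard_pos (hG g)).mpr ⟨g, IsConj.refl g⟩).ne'

theorem finiteIndex_centralizer (hG : IsFCGroup G) {s : Set G} (hs : s.Finite) :
    (centralizer s).FiniteIndex := by
  rw [← hs.coe_toFinset, centralizer_eq_iInf]
  exact finiteIndex_iInf' _ fun g _ ↦ hG.finiteIndex_centralizer_singleton g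

theorem finiteIndex_center (hG : IsFCGroup G) (H : Subgroup G) [H.FiniteIndex]
    [IsMulCommutative H] : (center G).FiniteIndex := by
  obtain ⟨T, hT, hclosure⟩ := H.exists_finite_closure_union_eq_top
  have := hG.finiteIndex_centralizer hT
  exact finiteIndex_of_le (inf_centralizer_le_center hclosure)

end IsFCGroup

theorem centralizer_nonabelian_general {G : Type*} [Group G]
    (hFC : ∀ g : G, {h : G | IsConj g h}.Finite)
    (hinf : Infinite (G ⧸ Subgroup.center G))
    (A : Subgroup G)
    (S : Finset G)
    (hgen : A = Subgroup.closure ((Subgroup.center G : Set G) ∪ ↑S)) :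
    ¬ IsMulCommutative (Subgroup.centralizer (A : Set G)) := by
  intro hcomm
  have hcentralizer : centralizer (A : Set G) = centralizer (S : Set G) := by
    rw [hgen, centralizer_closure, centralizer_center_union]
  have : (centralizer (A : Set G)).FiniteIndex :=
    hcentralizer ▸ IsFCGroup.finiteIndex_centralizer hFC S.finite_toSet
  have := IsFCGroup.finiteIndex_center hFC (centralizer (A : Set G))
  exact not_finite (G ⧸ center G)

theorem centralizer_nonabelian {G : Type*} [Group G]
    (hFC : ∀ g : G, {h : G | IsConj g h}.Finite)
    (hinf : Infinite (G ⧸ Subgroup.center G))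
    (A : Subgroup G) (hA : IsMulCommutative A)
    (S : Finset G)
    (hgen : A = Subgroup.closure ((Subgroup.center G : Set G) ∪ ↑S)) :
    ¬ IsMulCommutative (Subgroup.centralizer (A : Set G)) :=
  centralizer_nonabelian_general hFC hinf A S hgen
end

section
/- There is a Kurepa tree if and only if there is a Kurepa family. -/
/-- The canonical set of ordinals below `ω₁`, as a type. -/
abbrev Omega1 : Type := ((Cardinal.aleph 1).ord).ToType

/-- A Kurepa family: a family of at least `ℵ₂` subsets of `ω₁` such that for every
`α < ω₁` the family of traces on `α` is countable. -/
def IsKurepaFamily (F : Set (Set Omega1)) : Prop :=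
  Cardinal.aleph 2 ≤ Cardinal.mk F ∧
  ∀ α : Omega1, {s : Set Omega1 | ∃ A ∈ F, s = A ∩ {x | x < α}}.Countable

/-- `(T, lt)` is a Kurepa tree: a tree (strict order whose sets of predecessors are
well-ordered) of height `ω₁`, with all levels countable, and with at least `ℵ₂`
uncountable branches (maximal chains).  The height of a node is its well-founded rank,
which for trees agrees with the order type of its set of predecessors. -/
def IsKurepaTree (T : Type) (lt : T → T → Prop) : Prop :=
  (∀ a b c : T, lt a b → lt b c → lt a c) ∧
  (∀ a : T, ¬ lt a a) ∧
  (∀ x : T, IsChain lt {y | lt y x}) ∧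
  ∃ hwf : WellFounded lt,
    (∀ x : T, (hwf.apply x).rank < (Cardinal.aleph 1).ord) ∧
    (∀ α : Ordinal, α < (Cardinal.aleph 1).ord → ∃ x : T, (hwf.apply x).rank = α) ∧
    (∀ α : Ordinal, {x : T | (hwf.apply x).rank = α}.Countable) ∧
    Cardinal.aleph 2 ≤ Cardinal.mk {B : Set T | IsMaxChain lt B ∧ ¬ B.Countable}

/-!
A Kurepa tree gives a Kurepa family by transporting its uncountable branches into `ω₁` along an
injection `e` with `rank x ≤ e x` (code `x` as `ω * rank x + n`, where `n` enumerates the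
countable level of `x`). An uncountable branch `B` meets every level `α < ω₁`, and for the node `x`
of `B` at level `α` the trace `e '' B ∩ α` equals `e '' {z | z < x} ∩ α`; hence the traces at `α`
are indexed by the countable level `α`.

Conversely, the traces `A ∩ α` (`A ∈ F`, `α < ω₁`), ordered by end-extension, form a tree whose
`α`-th level is the countable set of traces at `α`, and distinct `A ∈ F` give distinct cofinal
branches `{A ∩ α | α < ω₁}`.
-/

open Cardinal Ordinal Set

namespace Ordinal.ToType
variable {o : Ordinal}

theorem coe_lt_coe {a b : o.ToType} : (a : Ordinal) < b ↔ a < b :=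
  Subtype.coe_lt_coe.trans ToType.mk.symm.lt_iff_lt

theorem coe_lt (a : o.ToType) : (a : Ordinal) < o := (ToType.mk.symm a).2

theorem coe_injective : Function.Injective (fun a : o.ToType => (a : Ordinal)) :=
  fun _ _ h => ToType.mk.symm.injective (Subtype.ext h)

theorem exists_coe_eq {p : Ordinal} (hp : p < o) : ∃ a : o.ToType, (a : Ordinal) = p :=
  ⟨ToType.mk ⟨p, hp⟩, by simp⟩

end Ordinal.ToType

theorem Ordinal.omega0_mul_add_natCast_lt_ord_aleph_one {r : Ordinal} (hr : r < (ℵ₁).ord)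
    (n : ℕ) : ω * r + n < (ℵ₁).ord := by
  have h := aleph0_le_aleph 1
  have hω : ω < (ℵ₁).ord := by simp [ord_aleph]
  exact isPrincipal_add_ord h (isPrincipal_mul_ord h hω hr) ((natCast_lt_omega0 n).trans hω)

theorem Ordinal.omega0_mul_add_natCast_inj {r r' : Ordinal} {m m' : ℕ}
    (h : ω * r + m = ω * r' + m') : r = r' ∧ m = m' := by
  have hdiv := congrArg (· / ω) h
  have hmod := congrArg (· % ω) h
  simp only [mul_add_div _ omega0_ne_zero, mul_add_mod_self] at hdiv hmod
  simpa [div_eq_zero_of_lt (natCast_lt_omega0 _), mod_eq_of_lt (natCast_lt_omega0 _)] using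
    And.intro hdiv hmod

theorem exists_injective_omega1_of_countable_fibers {T : Type*} (f : T → Ordinal)
    (hf : ∀ x, f x < (ℵ₁).ord) (hfib : ∀ p, {x | f x = p}.Countable) :
    ∃ e : T → Omega1, Function.Injective e ∧ ∀ x, f x ≤ e x := by
  choose g hg using fun p => countable_iff_exists_injOn.1 (hfib p)
  let e x : Omega1 :=
    ToType.mk ⟨ω * f x + g (f x) x, omega0_mul_add_natCast_lt_ord_aleph_one (hf x) _⟩
  have he x : (e x : Ordinal) = ω * f x + g (f x) x := by simp [e]
  refine ⟨e, fun x y hxy => ?_, fun x => ?_⟩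
  · have hcode := congrArg (fun a : Omega1 => (a : Ordinal)) hxy
    simp only [he] at hcode
    obtain ⟨hfxy, hgxy⟩ := omega0_mul_add_natCast_inj hcode
    exact hg (f x) rfl hfxy.symm (by rw [hgxy, hfxy])
  · rw [he]
    exact (le_mul_right _ omega0_pos).trans (le_add_right le_rfl)

namespace WellFounded
variable {α : Type*} {r : α → α → Prop}

theorem exists_rel_rank_eq_of_lt (htrans : ∀ a b c, r a b → r b c → r a c)
    (hwf : WellFounded r) {b : α} {o : Ordinal} (ho : o < (hwf.apply b).rank) :
    ∃ a, r a b ∧ (hwf.apply a).rank = o := by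
  induction b using hwf.induction generalizing o with
  | _ b IH =>
    rw [(hwf.apply b).rank_eq, Ordinal.lt_iSup_iff] at ho
    obtain ⟨⟨c, hcb⟩, hoc⟩ := ho
    obtain rfl | hoc := (Order.lt_succ_iff.1 hoc).eq_or_lt
    · exact ⟨c, hcb, rfl⟩
    · obtain ⟨a, hac, rfl⟩ := IH c hcb hoc
      exact ⟨a, htrans _ _ _ hac hcb, rfl⟩

theorem rank_apply_eq (hwf : WellFounded r) {f : α → Ordinal}
    (hlt : ∀ a b, r a b → f a < f b) (hsurj : ∀ b, ∀ o < f b, ∃ a, r a b ∧ f a = o) (b : α) :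
    (hwf.apply b).rank = f b := by
  induction b using hwf.induction with
  | _ b IH =>
    rw [(hwf.apply b).rank_eq]
    refine le_antisymm (Ordinal.iSup_le fun ⟨a, hab⟩ => ?_) (le_of_forall_lt fun o ho => ?_)
    · rw [Order.succ_le_iff, IH a hab]
      exact hlt a b hab
    · obtain ⟨a, hab, rfl⟩ := hsurj b o ho
      rw [← IH a hab]
      exact (Order.lt_succ _).trans_le (Ordinal.le_iSup _ (⟨a, hab⟩ : {a // r a b}))

theorem injOn_rank_of_isChain (hwf : WellFounded r) {s : Set α} (hs : IsChain r s) :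
    InjOn (fun a => (hwf.apply a).rank) s := by
  intro a ha b hb hab
  by_contra hne
  rcases hs ha hb hne with h | h
  · exact ((hwf.apply b).rank_lt_of_rel h).ne hab
  · exact ((hwf.apply a).rank_lt_of_rel h).ne' hab

theorem exists_mem_le_rank_of_not_countable (hwf : WellFounded r) {s : Set α}
    (hs : IsChain r s) (hsc : ¬ s.Countable) {o : Ordinal} (ho : o < (ℵ₁).ord) :
    ∃ a ∈ s, o ≤ (hwf.apply a).rank := by
  by_contra! h
  refine hsc (MapsTo.countable_of_injOn (t := Iio o) h (hwf.injOn_rank_of_isChain hs) ?_)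
  rw [← le_aleph0_iff_set_countable, Cardinal.mk_Iio_ordinal, lift_le_aleph0, ← lt_aleph_one_iff]
  exact lt_ord.1 ho

end WellFounded

section Tree
variable {T : Type*} {lt : T → T → Prop}

theorem IsMaxChain.mem_of_rel (htrans : ∀ a b c, lt a b → lt b c → lt a c)
    (hpred : ∀ b, IsChain lt {a | lt a b}) {s : Set T} (hs : IsMaxChain lt s) {a b : T}
    (hb : b ∈ s) (hab : lt a b) : a ∈ s := by
  have hins : IsChain lt (insert a s) := by
    refine hs.1.insert fun c hc hne => ?_
    obtain rfl | hcb := eq_or_ne c b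
    · exact Or.inl hab
    · rcases hs.1 hc hb hcb with h | h
      · exact hpred b hab h hne
      · exact Or.inl (htrans _ _ _ hab h)
  exact hs.2 hins (subset_insert a s) ▸ mem_insert a s

theorem IsMaxChain.exists_mem_rank_eq (htrans : ∀ a b c, lt a b → lt b c → lt a c)
    (hpred : ∀ b, IsChain lt {a | lt a b}) (hwf : WellFounded lt) {B : Set T}
    (hB : IsMaxChain lt B) (hBu : ¬ B.Countable) {o : Ordinal} (ho : o < (ℵ₁).ord) :
    ∃ x ∈ B, (hwf.apply x).rank = o := by
  obtain ⟨y, hyB, hoy⟩ := hwf.exists_mem_le_rank_of_not_countable hB.1 hBu ho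
  obtain rfl | hoy := hoy.eq_or_lt
  · exact ⟨y, hyB, rfl⟩
  · obtain ⟨x, hxy, hx⟩ := hwf.exists_rel_rank_eq_of_lt htrans hoy
    exact ⟨x, hB.mem_of_rel htrans hpred hyB hxy, hx⟩

theorem IsMaxChain.image_inter_Iio_eq (htrans : ∀ a b c, lt a b → lt b c → lt a c)
    (hpred : ∀ b, IsChain lt {a | lt a b}) (hwf : WellFounded lt) {B : Set T}
    (hB : IsMaxChain lt B) {x : T} (hx : x ∈ B) {β : Type*} [Preorder β] {e : T → β} {a : β}
    (he : ∀ z, e z < a → (hwf.apply z).rank < (hwf.apply x).rank) :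
    e '' B ∩ Iio a = e '' {z | lt z x} ∩ Iio a := by
  ext v
  constructor
  · rintro ⟨⟨z, hzB, rfl⟩, hza⟩
    refine ⟨⟨z, ?_, rfl⟩, hza⟩
    have hzx := he z hza
    rcases hB.1 hzB hx (by rintro rfl; exact hzx.false) with h | h
    · exact h
    · exact absurd ((hwf.apply z).rank_lt_of_rel h) hzx.asymm
  · rintro ⟨⟨z, hzx, rfl⟩, hza⟩
    exact ⟨⟨z, hB.mem_of_rel htrans hpred hx hzx, rfl⟩, hza⟩

end Tree

theorem IsKurepaTree.exists_isKurepaFamily {T : Type} {lt : T → T → Prop}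
    (hT : IsKurepaTree T lt) : ∃ F : Set (Set Omega1), IsKurepaFamily F := by
  obtain ⟨htrans, -, hpred, hwf, hlt, -, hlev, hbr⟩ := hT
  obtain ⟨e, he, hrank⟩ := exists_injective_omega1_of_countable_fibers _ hlt hlev
  refine ⟨image e '' {B | IsMaxChain lt B ∧ ¬ B.Countable}, ?_, fun a => ?_⟩
  · rwa [mk_image_eq (image_injective.2 he)]
  · refine ((hlev a).image fun x => e '' {z | lt z x} ∩ Iio a).mono ?_
    rintro _ ⟨_, ⟨B, ⟨hB, hBu⟩, rfl⟩, rfl⟩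
    obtain ⟨x, hxB, hx⟩ := hB.exists_mem_rank_eq htrans hpred hwf hBu (ToType.coe_lt a)
    refine ⟨x, hx, (hB.image_inter_Iio_eq htrans hpred hwf hxB fun z hz => ?_).symm⟩
    rw [hx]
    exact (hrank z).trans_lt (ToType.coe_lt_coe.2 hz)

def traces {α : Type*} [Preorder α] (F : Set (Set α)) (a : α) : Set (Set α) :=
  {s | ∃ A ∈ F, s = A ∩ Iio a}

@[ext]
structure TraceNode {α : Type*} [Preorder α] (F : Set (Set α)) where
  level : α
  trace : Set α
  trace_mem : trace ∈ traces F level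

theorem Set.inter_Iio_inter_Iio {α : Type*} [LinearOrder α] (s : Set α) {a b : α} (h : a ≤ b) :
    s ∩ Iio b ∩ Iio a = s ∩ Iio a := by
  rw [inter_assoc, Iio_inter_Iio, min_eq_right h]

namespace TraceNode

section LinearOrder
variable {α : Type*} [LinearOrder α] {F : Set (Set α)}

instance : LT (TraceNode F) :=
  ⟨fun x y => x.level < y.level ∧ x.trace = y.trace ∩ Iio x.level⟩

protected theorem lt_trans {x y z : TraceNode F} (hxy : x < y) (hyz : y < z) : x < z :=
  ⟨hxy.1.trans hyz.1, by rw [hxy.2, hyz.2, inter_Iio_inter_Iio _ hxy.1.le]⟩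

protected theorem lt_irrefl (x : TraceNode F) : ¬ x < x := fun h => h.1.false

theorem eq_of_level_eq_of_lt {x y z : TraceNode F} (hxz : x < z) (hyz : y < z)
    (h : x.level = y.level) : x = y := by
  ext1
  · exact h
  · rw [hxz.2, hyz.2, h]

theorem isChain_setOf_lt (z : TraceNode F) : IsChain (· < ·) {x | x < z} := by
  intro x hx y hy hne
  rcases lt_trichotomy x.level y.level with h | h | h
  · exact Or.inl ⟨h, by rw [hx.2, hy.2, inter_Iio_inter_Iio _ h.le]⟩
  · exact absurd (eq_of_level_eq_of_lt hx hy h) hne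
  · exact Or.inr ⟨h, by rw [hx.2, hy.2, inter_Iio_inter_Iio _ h.le]⟩

theorem exists_lt_level_eq (x : TraceNode F) {b : α} (hb : b < x.level) :
    ∃ y < x, y.level = b := by
  obtain ⟨A, hA, hx⟩ := x.trace_mem
  exact ⟨⟨b, x.trace ∩ Iio b, A, hA, by rw [hx, inter_Iio_inter_Iio _ hb.le]⟩, ⟨hb, rfl⟩, rfl⟩

theorem wellFounded_lt [WellFoundedLT α] :
    WellFounded (· < · : TraceNode F → TraceNode F → Prop) :=
  Subrelation.wf (fun h => h.1) (InvImage.wf level _root_.wellFounded_lt)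

theorem countable_setOf_level_eq {a : α} (h : (traces F a).Countable) :
    {x : TraceNode F | x.level = a}.Countable := by
  refine MapsTo.countable_of_injOn (f := trace) (fun x hx => ?_) (fun x hx y hy hxy => ?_) h
  · rw [← show x.level = a from hx]
    exact x.trace_mem
  · ext1
    · exact hx.trans hy.symm
    · exact hxy

def branch (A : F) (b : α) : TraceNode F := ⟨b, A ∩ Iio b, A, A.2, rfl⟩

theorem branch_injective (A : F) : Function.Injective (branch A) :=
  fun _ _ h => congrArg level h

theorem branch_lt_branch {A : F} {b c : α} : branch A b < branch A c ↔ b < c :=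
  ⟨And.left, fun h => ⟨h, (inter_Iio_inter_Iio _ h.le).symm⟩⟩

theorem isChain_range_branch (A : F) : IsChain (· < ·) (range (branch A)) := by
  rintro _ ⟨b, rfl⟩ _ ⟨c, rfl⟩ hne
  rcases lt_trichotomy b c with h | rfl | h
  · exact Or.inl (branch_lt_branch.2 h)
  · exact absurd rfl hne
  · exact Or.inr (branch_lt_branch.2 h)

theorem mem_range_branch_of_lt {A : F} {x : TraceNode F} {c : α} (h : x < branch A c) :
    x ∈ range (branch A) := by
  refine ⟨x.level, ?_⟩
  ext1
  · rfl
  · rw [h.2]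
    exact (inter_Iio_inter_Iio _ h.1.le).symm

variable [NoMaxOrder α]

theorem isMaxChain_range_branch (A : F) : IsMaxChain (· < ·) (range (branch A)) := by
  refine ⟨isChain_range_branch A, fun C hC hsub => hsub.antisymm fun x hx => ?_⟩
  obtain ⟨c, hc⟩ := exists_gt x.level
  have hcC : branch A c ∈ C := hsub (mem_range_self c)
  obtain rfl | hne := eq_or_ne x (branch A c)
  · exact mem_range_self c
  · rcases hC hx hcC hne with h | h
    · exact mem_range_branch_of_lt h
    · exact absurd h.1 hc.asymm

theorem range_branch_injective : Function.Injective fun A : F => range (branch A) := by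
  intro A B (h : range (branch A) = range (branch B))
  ext v
  obtain ⟨c, hc⟩ := exists_gt v
  obtain ⟨b, hb⟩ : branch A c ∈ range (branch B) := h ▸ mem_range_self c
  obtain rfl : b = c := congrArg level hb
  have htr : B.1 ∩ Iio b = A.1 ∩ Iio b := congrArg trace hb
  simpa [hc] using congrArg (v ∈ ·) htr.symm

end LinearOrder

section Ordinal
variable {o : Ordinal} {F : Set (Set o.ToType)}

theorem rank_eq (x : TraceNode F) : (wellFounded_lt.apply x).rank = x.level := by
  refine wellFounded_lt.rank_apply_eq (fun x y h => ToType.coe_lt_coe.2 h.1)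
    (fun y p hp => ?_) x
  obtain ⟨b, rfl⟩ := ToType.exists_coe_eq (hp.trans (ToType.coe_lt _))
  obtain ⟨x, hxy, rfl⟩ := y.exists_lt_level_eq (ToType.coe_lt_coe.1 hp)
  exact ⟨x, hxy, rfl⟩

theorem countable_setOf_rank_eq (hF : ∀ a, (traces F a).Countable) (p : Ordinal) :
    {x : TraceNode F | (wellFounded_lt.apply x).rank = p}.Countable := by
  simp only [rank_eq]
  by_cases hp : p < o
  · obtain ⟨a, rfl⟩ := ToType.exists_coe_eq hp
    simpa only [ToType.coe_injective.eq_iff] using countable_setOf_level_eq (hF a)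
  · convert countable_empty
    ext x
    simp only [mem_ofPred_eq, mem_empty_iff_false, iff_false]
    rintro rfl
    exact hp (ToType.coe_lt _)

end Ordinal

theorem not_countable_range_branch {F : Set (Set Omega1)} (A : F) :
    ¬ (range (branch A)).Countable := by
  rw [← le_aleph0_iff_set_countable, mk_range_eq _ (branch_injective A), mk_toType, card_ord]
  exact aleph0_lt_aleph_one.not_ge

end TraceNode

instance : NoMaxOrder Omega1 := Cardinal.noMaxOrder (aleph0_le_aleph 1)

theorem IsKurepaFamily.isKurepaTree {F : Set (Set Omega1)} (hF : IsKurepaFamily F) :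
    IsKurepaTree (TraceNode F) (· < ·) := by
  obtain ⟨A⟩ : Nonempty F := mk_ne_zero_iff.1 ((aleph_pos 2).trans_le hF.1).ne'
  refine ⟨fun _ _ _ => TraceNode.lt_trans, TraceNode.lt_irrefl, TraceNode.isChain_setOf_lt,
    TraceNode.wellFounded_lt, fun x => ?_, fun p hp => ?_,
    TraceNode.countable_setOf_rank_eq hF.2, ?_⟩
  · rw [TraceNode.rank_eq]
    exact ToType.coe_lt _
  · obtain ⟨a, rfl⟩ := ToType.exists_coe_eq hp
    exact ⟨TraceNode.branch A a, TraceNode.rank_eq _⟩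
  · refine hF.1.trans (mk_le_of_injective (f := fun A : F => ⟨range (TraceNode.branch A),
      TraceNode.isMaxChain_range_branch A, TraceNode.not_countable_range_branch A⟩) ?_)
    exact fun A B h => TraceNode.range_branch_injective (congrArg Subtype.val h)

theorem kurepa_tree_iff_kurepa_family :
    (∃ (T : Type) (lt : T → T → Prop), IsKurepaTree T lt) ↔
    (∃ F : Set (Set Omega1), IsKurepaFamily F) :=
  ⟨fun ⟨_, _, hT⟩ => hT.exists_isKurepaFamily,
    fun ⟨F, hF⟩ => ⟨TraceNode F, (· < ·), hF.isKurepaTree⟩⟩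
end
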